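/- For m ≥ ρ ≥ 2 and m ≥ 3, every classification aggregation function that is unanimous and independent is a dictatorship, i.e., there exists an individual d ∈ N such that α(c) = c_d for every profile c. -/
import Mathlib


/-- A classification: a surjective mapping from objects `X` to categories `P`. -/
abbrev Classif (X P : Type) : Type := {c : X → P // Function.Surjective c}

/-- A profile of classifications, one per individual in `Fin n`. -/
abbrev Profile (n : ℕ) (X P : Type) : Type := Fin n → Classif X P

/-- A CAF is independent if the aggregate category of an object only depends on the
categories the individuals put that object in. -/
def Independent {n : ℕ} {X P : Type} (α : Profile n X P → Classif X P) : Prop :=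
  ∀ (x : X) (c c' : Profile n X P),
    (∀ i, (c i).1 x = (c' i).1 x) → (α c).1 x = (α c').1 x

/-- A CAF is citizen sovereign if any object can be classified in any category. -/
def CitizenSovereign {n : ℕ} {X P : Type} (α : Profile n X P → Classif X P) : Prop :=
  ∀ (x : X) (p : P), ∃ c : Profile n X P, (α c).1 x = p

/-- A CAF is unanimous if it maps every constant profile `(c, …, c)` to `c`. -/
def Unanimous {n : ℕ} {X P : Type} (α : Profile n X P → Classif X P) : Prop :=
  ∀ c : Classif X P, (α (fun _ => c)).1 = c.1

/-- A CAF satisfies generalized unanimity if there is a permutation `π` of `P` with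
`α(c, …, c) = π ∘ c` for every classification `c`. -/
def GeneralizedUnanimity {n : ℕ} {X P : Type} (α : Profile n X P → Classif X P) : Prop :=
  ∃ π : Equiv.Perm P, ∀ c : Classif X P, (α (fun _ => c)).1 = π ∘ c.1

/-- A CAF is essentially a dictatorship if there are an individual `d` and a permutation
`π` of `P` such that `α(c) = π ∘ c_d` for every profile `c`. -/
def EssentiallyDictatorship {n : ℕ} {X P : Type} (α : Profile n X P → Classif X P) : Prop :=
  ∃ (d : Fin n) (π : Equiv.Perm P), ∀ c : Profile n X P, (α c).1 = π ∘ (c d).1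

/-- A CAF is a dictatorship if there is an individual `d` such that `α(c) = c_d`
for every profile `c`. -/
def Dictatorship {n : ℕ} {X P : Type} (α : Profile n X P → Classif X P) : Prop :=
  ∃ d : Fin n, ∀ c : Profile n X P, (α c).1 = (c d).1

section AuxCAF

variable {n : ℕ} {X P : Type}

/-- Two-valued vector: `p` on `S`, `q` off `S`. -/
def tvv (S : Finset (Fin n)) (p q : P) : Fin n → P := fun i => if i ∈ S then p else q

open Classical in
/-- The local aggregator at object `x`. -/
noncomputable def fxv [Nonempty P] (α : Profile n X P → Classif X P) (x : X) (v : Fin n → P) : P :=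
  if h : ∃ c : Profile n X P, ∀ i, (c i).1 x = v i then (α h.choose).1 x
  else Classical.arbitrary P

lemma exists_cover [Fintype X] [DecidableEq X] [DecidableEq P]
    (s : Finset X) (Q : Finset P) (h : Q.card ≤ s.card) (t0 : P) :
    ∃ g : X → P, (∀ w, w ∈ s → (g w = t0 ∨ g w ∈ Q)) ∧ (∀ p ∈ Q, ∃ w ∈ s, g w = p) := by
  classical
  obtain ⟨t, hts, htc⟩ := Finset.exists_subset_card_eq h
  have e : {x // x ∈ t} ≃ {p // p ∈ Q} := Finset.equivOfCardEq htc
  refine ⟨fun w => if hw : w ∈ t then (e ⟨w, hw⟩ : P) else t0, ?_, ?_⟩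
  · intro w hw
    by_cases hwt : w ∈ t
    · right; simp only [dif_pos hwt]; exact (e ⟨w, hwt⟩).2
    · left; simp only [dif_neg hwt]
  · intro p hp
    refine ⟨(e.symm ⟨p, hp⟩ : X), hts (e.symm ⟨p, hp⟩).2, ?_⟩
    simp only [dif_pos (e.symm ⟨p, hp⟩).2]
    have h2 : (⟨(e.symm ⟨p, hp⟩ : X), (e.symm ⟨p, hp⟩).2⟩ : {x // x ∈ t}) = e.symm ⟨p, hp⟩ := rfl
    rw [h2, e.apply_symm_apply]

lemma principal_of_family (u : Finset (Fin n) → Prop)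
    (hN : u Finset.univ) (hmax : ∀ S, u Sᶜ ↔ ¬ u S)
    (hint : ∀ S T, u S → u T → u (S ∩ T)) :
    ∃ d : Fin n, ∀ S, u S ↔ d ∈ S := by
  classical
  obtain ⟨M, hMmem, hMmin⟩ := Finset.exists_min_image (Finset.univ.filter u) Finset.card
    ⟨Finset.univ, by simp [hN]⟩
  have hMu : u M := (Finset.mem_filter.1 hMmem).2
  have least : ∀ S, u S → M ⊆ S := by
    intro S hS
    have h1 : u (M ∩ S) := hint _ _ hMu hS
    have h2 : M.card ≤ (M ∩ S).card := hMmin _ (by simp [h1])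
    have h3 : M ∩ S = M := Finset.eq_of_subset_of_card_le Finset.inter_subset_left h2
    intro a ha
    exact Finset.inter_subset_right (h3 ▸ ha)
  have hne : M.Nonempty := by
    rcases Finset.eq_empty_or_nonempty M with h | h
    · exfalso
      have : u (Finset.univ : Finset (Fin n))ᶜ := by rwa [Finset.compl_univ, ← h]
      exact ((hmax _).1 this) hN
    · exact h
  obtain ⟨d, hd⟩ := hne
  refine ⟨d, fun S => ⟨fun hS => ?_, fun hS => ?_⟩⟩
  · exact least _ hS hd
  · by_contra h
    have hSc : u Sᶜ := (hmax _).2 h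
    have hmem : d ∈ Sᶜ := least _ hSc hd
    rw [Finset.mem_compl] at hmem
    exact hmem hS

lemma exists_third {T : Type} [Fintype T] [DecidableEq T] (h : 3 ≤ Fintype.card T)
    (x y : T) : ∃ z : T, z ≠ x ∧ z ≠ y := by
  by_contra hc
  push_neg at hc
  have hsub : (Finset.univ : Finset T) ⊆ {x, y} := by
    intro z _
    rcases (em (z = x)) with h1 | h1
    · simp [h1]
    · simp [hc z h1]
  have hle := Finset.card_le_card hsub
  rw [Finset.card_univ] at hle
  have h2 : ({x, y} : Finset T).card ≤ 2 := by
    apply le_trans (Finset.card_insert_le _ _)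
    simp
  omega

lemma exists_triple {T : Type} [Fintype T] [DecidableEq T] (h : 3 ≤ Fintype.card T) :
    ∃ a b c : T, a ≠ b ∧ a ≠ c ∧ b ≠ c := by
  have h1 : 1 < Fintype.card T := by omega
  obtain ⟨a, b, hab⟩ := Fintype.exists_pair_of_one_lt_card h1
  obtain ⟨c, hc⟩ := exists_third h a b
  exact ⟨a, b, c, hab, (Ne.symm hc.1), (Ne.symm hc.2)⟩

lemma three_cover {T : Type} {p q r a b c : T} (hab : a ≠ b) (hac : a ≠ c) (hbc : b ≠ c)
    (ha : a = p ∨ a = q ∨ a = r) (hb : b = p ∨ b = q ∨ b = r) (hc : c = p ∨ c = q ∨ c = r)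
    {t : T} (ht : t = p ∨ t = q ∨ t = r) : t = a ∨ t = b ∨ t = c := by
  rcases ha with ha|ha|ha <;> rcases hb with hb|hb|hb <;> rcases hc with hc|hc|hc <;>
    rcases ht with ht|ht|ht <;> subst_vars <;> tauto

end AuxCAF

/-- **Corollary 2.** For `m ≥ ρ ≥ 2` and `m ≥ 3`, every unanimous and independent CAF is
a dictatorship. -/
theorem unanimous_independent_dictatorship_of_three_objects
    {n ρ m : ℕ} (hn : 2 ≤ n) (hρ : 2 ≤ ρ) (hm : ρ ≤ m) (hm3 : 3 ≤ m)
    (X P : Type) [Fintype X] [Fintype P]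
    (hX : Fintype.card X = m) (hP : Fintype.card P = ρ)
    (α : Profile n X P → Classif X P)
    (hU : Unanimous α) (hInd : Independent α) :
    Dictatorship α := by
  classical
  haveI hPne : Nonempty P := Fintype.card_pos_iff.mp (by rw [hP]; omega)
  haveI hXne : Nonempty X := Fintype.card_pos_iff.mp (by rw [hX]; omega)
  obtain ⟨x₀⟩ := hXne
  -- basic facts about fxv
  have hfx : ∀ (c : Profile n X P) (x : X) (v : Fin n → P),
      (∀ i, (c i).1 x = v i) → (α c).1 x = fxv α x v := by
    intro c x v hv
    have hex : ∃ c' : Profile n X P, ∀ i, (c' i).1 x = v i := ⟨c, hv⟩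
    unfold fxv
    split
    next h => exact hInd x c h.choose fun i => (hv i).trans (h.choose_spec i).symm
    next h => exact absurd hex h
  -- single-value prescription
  have hsub1 : ∀ (x : X) (a : P), ∃ c : Classif X P, c.1 x = a := by
    intro x a
    obtain ⟨g, hg1, hg2⟩ := exists_cover (Finset.univ.erase x) (Finset.univ.erase a)
      (by rw [Finset.card_erase_of_mem (Finset.mem_univ _),
              Finset.card_erase_of_mem (Finset.mem_univ _),
              Finset.card_univ, Finset.card_univ, hX, hP]; omega) a
    refine ⟨⟨fun w => if w = x then a else g w, ?_⟩, by simp⟩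
    intro b
    by_cases hb : b = a
    · exact ⟨x, by simp [hb]⟩
    · obtain ⟨w, hws, hgw⟩ := hg2 b (by simp [hb])
      have hwx : w ≠ x := (Finset.mem_erase.1 hws).1
      exact ⟨w, by simp [hwx, hgw]⟩
  -- two-value prescription with distinct values
  have hsub2 : ∀ (x y : X) (a b : P), x ≠ y → a ≠ b →
      ∃ c : Classif X P, c.1 x = a ∧ c.1 y = b := by
    intro x y a b hxy hab
    have hyx : y ≠ x := Ne.symm hxy
    obtain ⟨g, hg1, hg2⟩ := exists_cover ((Finset.univ.erase x).erase y)
      ((Finset.univ.erase a).erase b)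
      (by rw [Finset.card_erase_of_mem (Finset.mem_erase.2 ⟨Ne.symm hab, Finset.mem_univ _⟩),
              Finset.card_erase_of_mem (Finset.mem_univ _),
              Finset.card_erase_of_mem (Finset.mem_erase.2 ⟨hyx, Finset.mem_univ _⟩),
              Finset.card_erase_of_mem (Finset.mem_univ _),
              Finset.card_univ, Finset.card_univ, hX, hP]; omega) a
    refine ⟨⟨fun w => if w = x then a else if w = y then b else g w, ?_⟩,
      by simp, by simp [hyx]⟩
    intro t
    by_cases ht1 : t = a
    · exact ⟨x, by simp [ht1]⟩
    · by_cases ht2 : t = b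
      · exact ⟨y, by simp [ht2, hyx]⟩
      · obtain ⟨w, hws, hgw⟩ := hg2 t (by simp [ht1, ht2])
        have hw1 : w ≠ y := (Finset.mem_erase.1 hws).1
        have hw2 : w ≠ x := (Finset.mem_erase.1 (Finset.mem_erase.1 hws).2).1
        exact ⟨w, by simp [hw1, hw2, hgw]⟩
  have hconst : ∀ (x : X) (p : P), fxv α x (fun _ => p) = p := by
    intro x p
    obtain ⟨c, hc⟩ := hsub1 x p
    have h1 : (α (fun _ => c)).1 x = fxv α x (fun _ => p) := hfx _ x _ (fun _ => hc)
    rw [← h1, hU c, hc]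
  -- Lemma M : pair-coverage on two-valued vectors
  have hM : ∀ (x y : X), x ≠ y → ∀ (S : Finset (Fin n)) (p q : P), p ≠ q →
      (fxv α x (tvv S p q) = p ∧ fxv α y (tvv Sᶜ p q) = q) ∨
      (fxv α x (tvv S p q) = q ∧ fxv α y (tvv Sᶜ p q) = p) := by
    intro x y hxy S p q hpq
    have hyx : y ≠ x := Ne.symm hxy
    have step : ∀ o t0 : P, o ≠ t0 → (o = p ∨ o = q) →
        fxv α x (tvv S p q) = o ∨ fxv α y (tvv Sᶜ p q) = o := by
      intro o t0 hot ho
      obtain ⟨g, hg1, hg2⟩ := exists_cover ((Finset.univ.erase x).erase y)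
        ((Finset.univ.erase p).erase q)
        (by rw [Finset.card_erase_of_mem (Finset.mem_erase.2 ⟨Ne.symm hpq, Finset.mem_univ _⟩),
                Finset.card_erase_of_mem (Finset.mem_univ _),
                Finset.card_erase_of_mem (Finset.mem_erase.2 ⟨hyx, Finset.mem_univ _⟩),
                Finset.card_erase_of_mem (Finset.mem_univ _),
                Finset.card_univ, Finset.card_univ, hX, hP]; omega) t0
      have csurj : ∀ i : Fin n, Function.Surjective
          (fun w => if w = x then tvv S p q i else if w = y then tvv Sᶜ p q i else g w) := by
        intro i b
        by_cases hbp : b = p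
        · subst hbp
          by_cases hiS : i ∈ S
          · exact ⟨x, by simp [tvv, hiS]⟩
          · exact ⟨y, by simp [tvv, hyx, hiS]⟩
        · by_cases hbq : b = q
          · subst hbq
            by_cases hiS : i ∈ S
            · exact ⟨y, by simp [tvv, hyx, hiS]⟩
            · exact ⟨x, by simp [tvv, hiS]⟩
          · obtain ⟨w, hws, hgw⟩ := hg2 b (by simp [hbp, hbq])
            have hw1 : w ≠ y := (Finset.mem_erase.1 hws).1
            have hw2 : w ≠ x := (Finset.mem_erase.1 (Finset.mem_erase.1 hws).2).1
            exact ⟨w, by simp [hw1, hw2, hgw]⟩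
      set c : Profile n X P := fun i => ⟨_, csurj i⟩ with hc
      have hcx : (α c).1 x = fxv α x (tvv S p q) := hfx c x _ (fun i => by simp [hc])
      have hcy : (α c).1 y = fxv α y (tvv Sᶜ p q) := hfx c y _ (fun i => by simp [hc, hyx])
      obtain ⟨w, hw⟩ := (α c).2 o
      by_cases hwx : w = x
      · left; rw [← hcx, ← hw, hwx]
      · by_cases hwy : w = y
        · right; rw [← hcy, ← hw, hwy]
        · exfalso
          have hcw : (α c).1 w = fxv α w (fun _ => g w) :=
            hfx c w _ (fun i => by simp [hc, hwx, hwy])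
          rw [hconst] at hcw
          have hmem : w ∈ (Finset.univ.erase x).erase y :=
            Finset.mem_erase.2 ⟨hwy, Finset.mem_erase.2 ⟨hwx, Finset.mem_univ _⟩⟩
          rcases hg1 w hmem with h1 | h1
          · rw [hw, h1] at hcw; exact hot hcw
          · have h2 := Finset.mem_erase.1 h1
            have h3 := Finset.mem_erase.1 h2.2
            rw [hw] at hcw
            rcases ho with h4 | h4
            · exact h3.1 (by rw [← hcw, h4])
            · exact h2.1 (by rw [← hcw, h4])
      
    have s1 := step q p hpq.symm (Or.inr rfl)
    have s2 := step p q hpq (Or.inl rfl)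
    rcases s1 with h1 | h1
    · rcases s2 with h2 | h2
      · exact absurd (h2.symm.trans h1) hpq
      · exact Or.inr ⟨h1, h2⟩
    · rcases s2 with h2 | h2
      · exact Or.inl ⟨h2, h1⟩
      · exact absurd (h2.symm.trans h1) hpq
  have hX3 : 3 ≤ Fintype.card X := by rw [hX]; exact hm3
  have hcomm : ∀ (x y : X) (S : Finset (Fin n)) (p q : P), p ≠ q →
      fxv α x (tvv S p q) = fxv α y (tvv S p q) := by
    intro x y S p q hpq
    by_cases hxy : x = y
    · rw [hxy]
    · obtain ⟨z, hzx, hzy⟩ := exists_third hX3 x y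
      rcases hM x z (Ne.symm hzx) S p q hpq with ⟨h1, h2⟩ | ⟨h1, h2⟩ <;>
        rcases hM y z (Ne.symm hzy) S p q hpq with ⟨h3, h4⟩ | ⟨h3, h4⟩
      · rw [h1, h3]
      · exact absurd (h4.symm.trans h2) hpq
      · exact absurd (h2.symm.trans h4) hpq
      · rw [h1, h3]
  have hMx : ∀ (x : X) (S : Finset (Fin n)) (p q : P), p ≠ q →
      (fxv α x (tvv S p q) = p ∧ fxv α x (tvv Sᶜ p q) = q) ∨
      (fxv α x (tvv S p q) = q ∧ fxv α x (tvv Sᶜ p q) = p) := by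
    intro x S p q hpq
    obtain ⟨z, hzx, _⟩ := exists_third hX3 x x
    have hzc := hcomm z x Sᶜ p q hpq
    rcases hM x z (Ne.symm hzx) S p q hpq with ⟨h1, h2⟩ | ⟨h1, h2⟩
    · exact Or.inl ⟨h1, hzc ▸ h2⟩
    · exact Or.inr ⟨h1, hzc ▸ h2⟩
  have hmemb : ∀ (x : X) (S : Finset (Fin n)) (p q : P), p ≠ q →
      fxv α x (tvv S p q) = p ∨ fxv α x (tvv S p q) = q := by
    intro x S p q hpq
    rcases hMx x S p q hpq with ⟨h1, _⟩ | ⟨h1, _⟩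
    · exact Or.inl h1
    · exact Or.inr h1
  have hflip : ∀ (x : X) (S : Finset (Fin n)) (p q : P), p ≠ q →
      (fxv α x (tvv Sᶜ p q) = q ↔ fxv α x (tvv S p q) = p) := by
    intro x S p q hpq
    rcases hMx x S p q hpq with ⟨h1, h2⟩ | ⟨h1, h2⟩
    · exact ⟨fun _ => h1, fun _ => h2⟩
    · constructor
      · intro h3; exact absurd (h2.symm.trans h3) hpq
      · intro h3; exact absurd (h1.symm.trans h3) (Ne.symm hpq)
  have hNU : ∀ (x : X) (p q : P), fxv α x (tvv Finset.univ p q) = p := by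
    intro x p q
    have h1 : tvv (Finset.univ : Finset (Fin n)) p q = fun _ => p :=
      funext fun i => if_pos (Finset.mem_univ i)
    rw [h1, hconst]
  have tvv_compl : ∀ (S : Finset (Fin n)) (p q : P), tvv S q p = tvv Sᶜ p q := by
    intro S p q
    funext i
    simp only [tvv, Finset.mem_compl]
    by_cases hiS : i ∈ S <;> simp [hiS]
  have hsymm : ∀ (x : X) (S : Finset (Fin n)) (p q : P), p ≠ q →
      (fxv α x (tvv S q p) = q ↔ fxv α x (tvv S p q) = p) := by
    intro x S p q hpq
    rw [tvv_compl]
    exact hflip x S p q hpq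
  -- the key statement, proven separately in the two regimes
  have hcardle : Fintype.card P ≤ Fintype.card X := by rw [hX, hP]; exact hm
  have key : ∃ d : Fin n, ∀ (x : X) (v : Fin n → P), fxv α x v = v d := by
    rcases lt_or_eq_of_le hcardle with hPX | hPX
    · -- regime A : more objects than categories
      have hlt : ρ < m := by rw [← hX, ← hP]; exact hPX
      obtain ⟨p₀, q₀, hp₀q₀⟩ := Fintype.exists_pair_of_one_lt_card (α := P) (by rw [hP]; omega)
      -- intersection closure
      have hint : ∀ (S T : Finset (Fin n)) (p q : P), p ≠ q →
          fxv α x₀ (tvv S p q) = p → fxv α x₀ (tvv T p q) = p →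
          fxv α x₀ (tvv (S ∩ T) p q) = p := by
        intro S T p q hpq hS hT
        obtain ⟨x, y, z, hxy, hxz, hyz⟩ := exists_triple hX3
        have hyx : y ≠ x := Ne.symm hxy
        have hzx : z ≠ x := Ne.symm hxz
        have hzy : z ≠ y := Ne.symm hyz
        obtain ⟨g, hg1, hg2⟩ := exists_cover (((Finset.univ.erase x).erase y).erase z)
          ((Finset.univ.erase p).erase q)
          (by rw [Finset.card_erase_of_mem (Finset.mem_erase.2 ⟨Ne.symm hpq, Finset.mem_univ _⟩),
                  Finset.card_erase_of_mem (Finset.mem_univ _),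
                  Finset.card_erase_of_mem
                    (Finset.mem_erase.2 ⟨hzy, Finset.mem_erase.2 ⟨hzx, Finset.mem_univ _⟩⟩),
                  Finset.card_erase_of_mem (Finset.mem_erase.2 ⟨hyx, Finset.mem_univ _⟩),
                  Finset.card_erase_of_mem (Finset.mem_univ _),
                  Finset.card_univ, Finset.card_univ, hX, hP]; omega) p
        have csurj : ∀ i : Fin n, Function.Surjective
            (fun w => if w = x then tvv S p q i else if w = y then tvv T p q i
              else if w = z then tvv (S ∩ T)ᶜ p q i else g w) := by
          intro i b
          by_cases hbp : b = p
          · subst hbp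
            by_cases hiS : i ∈ S
            · exact ⟨x, by simp [tvv, hiS]⟩
            · refine ⟨z, by simp [tvv, hzx, hzy, Finset.mem_compl, Finset.mem_inter, hiS]⟩
          · by_cases hbq : b = q
            · subst hbq
              by_cases hiS : i ∈ S
              · by_cases hiT : i ∈ T
                · exact ⟨z, by simp [tvv, hzx, hzy, Finset.mem_compl, Finset.mem_inter, hiS, hiT]⟩
                · exact ⟨y, by simp [tvv, hyx, hiT]⟩
              · exact ⟨x, by simp [tvv, hiS]⟩
            · obtain ⟨w, hws, hgw⟩ := hg2 b (by simp [hbp, hbq])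
              have hw1 : w ≠ z := (Finset.mem_erase.1 hws).1
              have hw2 : w ≠ y := (Finset.mem_erase.1 (Finset.mem_erase.1 hws).2).1
              have hw3 : w ≠ x :=
                (Finset.mem_erase.1 (Finset.mem_erase.1 (Finset.mem_erase.1 hws).2).2).1
              exact ⟨w, by simp [hw1, hw2, hw3, hgw]⟩
        set c : Profile n X P := fun i => ⟨_, csurj i⟩ with hc
        have hcx : (α c).1 x = fxv α x (tvv S p q) := hfx c x _ (fun i => by simp [hc])
        have hcy : (α c).1 y = fxv α y (tvv T p q) := hfx c y _ (fun i => by simp [hc, hyx])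
        have hcz : (α c).1 z = fxv α z (tvv (S ∩ T)ᶜ p q) :=
          hfx c z _ (fun i => by simp [hc, hzx, hzy])
        obtain ⟨w, hw⟩ := (α c).2 q
        have hwz : w = z := by
          by_contra hwz
          by_cases hwx : w = x
          · rw [hwx, hcx, hcomm x x₀ S p q hpq, hS] at hw; exact hpq hw
          · by_cases hwy : w = y
            · rw [hwy, hcy, hcomm y x₀ T p q hpq, hT] at hw; exact hpq hw
            · have hcw : (α c).1 w = fxv α w (fun _ => g w) :=
                hfx c w _ (fun i => by simp [hc, hwx, hwy, hwz])
              rw [hconst] at hcw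
              have hmem : w ∈ ((Finset.univ.erase x).erase y).erase z :=
                Finset.mem_erase.2 ⟨hwz, Finset.mem_erase.2 ⟨hwy,
                  Finset.mem_erase.2 ⟨hwx, Finset.mem_univ _⟩⟩⟩
              rcases hg1 w hmem with h1 | h1
              · rw [hw, h1] at hcw; exact hpq hcw.symm
              · have h2 := Finset.mem_erase.1 h1
                rw [hw] at hcw
                exact h2.1 hcw.symm
        rw [hwz, hcz, hcomm z x₀ _ p q hpq] at hw
        have := (hflip x₀ (S ∩ T) p q hpq).1 hw
        exact this
      -- per-pair dictator
      have hprin : ∀ p q : P, p ≠ q → ∃ d : Fin n, ∀ S : Finset (Fin n),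
          fxv α x₀ (tvv S p q) = p ↔ d ∈ S := by
        intro p q hpq
        apply principal_of_family (fun S => fxv α x₀ (tvv S p q) = p)
        · exact hNU x₀ p q
        · intro S
          constructor
          · intro h1 h2
            have h3 := (hflip x₀ S p q hpq).2 h2
            rw [h1] at h3; exact hpq h3
          · intro h1
            rcases hMx x₀ S p q hpq with ⟨h2, _⟩ | ⟨_, h3⟩
            · exact absurd h2 h1
            · exact h3
        · exact fun S T => hint S T p q hpq
      -- the pinching lemma
      have pinch : ∀ (p q : P), p ≠ q → ∀ (dpq : Fin n),
          (∀ S : Finset (Fin n), fxv α x₀ (tvv S p q) = p ↔ dpq ∈ S) →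
          ∀ (x : X) (v : Fin n → P), v dpq = q → fxv α x v = q := by
        intro p q hpq dpq hdpq x v hv
        obtain ⟨y, hyx, _⟩ := exists_third hX3 x x
        set S : Finset (Fin n) := Finset.univ.filter (fun i => v i ≠ q) with hSdef
        obtain ⟨g, hg1, hg2⟩ := exists_cover ((Finset.univ.erase x).erase y)
          (Finset.univ.erase q)
          (by rw [Finset.card_erase_of_mem (Finset.mem_univ _),
                  Finset.card_erase_of_mem (Finset.mem_erase.2 ⟨hyx, Finset.mem_univ _⟩),
                  Finset.card_erase_of_mem (Finset.mem_univ _),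
                  Finset.card_univ, Finset.card_univ, hX, hP]; omega) p
        have hgq : ∀ w, w ∈ (Finset.univ.erase x).erase y → g w ≠ q := by
          intro w hwmem
          rcases hg1 w hwmem with h1 | h1
          · rw [h1]; exact hpq
          · exact (Finset.mem_erase.1 h1).1
        have csurj : ∀ i : Fin n, Function.Surjective
            (fun w => if w = x then v i else if w = y then tvv S q p i else g w) := by
          intro i b
          by_cases hbq : b = q
          · by_cases hvi : v i = q
            · exact ⟨x, by simp [hvi, hbq]⟩
            · exact ⟨y, by simp [tvv, hyx, hSdef, hvi, hbq]⟩
          · obtain ⟨w, hws, hgw⟩ := hg2 b (by simp [hbq])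
            have hw1 : w ≠ y := (Finset.mem_erase.1 hws).1
            have hw2 : w ≠ x := (Finset.mem_erase.1 (Finset.mem_erase.1 hws).2).1
            exact ⟨w, by simp [hw1, hw2, hgw]⟩
        set c : Profile n X P := fun i => ⟨_, csurj i⟩ with hc
        have hcx : (α c).1 x = fxv α x v := hfx c x _ (fun i => by simp [hc])
        have hcy : (α c).1 y = fxv α y (tvv S q p) := hfx c y _ (fun i => by simp [hc, hyx])
        have hyval : fxv α y (tvv S q p) = p := by
          rw [hcomm y x₀ S q p (Ne.symm hpq)]
          have h1 : ¬ (fxv α x₀ (tvv S q p) = q) := by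
            rw [hsymm x₀ S p q hpq, hdpq S, hSdef]
            simp [hv]
          rcases hmemb x₀ S q p (Ne.symm hpq) with h2 | h2
          · exact absurd h2 h1
          · exact h2
        obtain ⟨w, hw⟩ := (α c).2 q
        have hwx : w = x := by
          by_contra hwx
          by_cases hwy : w = y
          · rw [hwy, hcy, hyval] at hw; exact hpq hw
          · have hcw : (α c).1 w = fxv α w (fun _ => g w) :=
              hfx c w _ (fun i => by simp [hc, hwx, hwy])
            rw [hconst] at hcw
            have hmem : w ∈ (Finset.univ.erase x).erase y :=
              Finset.mem_erase.2 ⟨hwy, Finset.mem_erase.2 ⟨hwx, Finset.mem_univ _⟩⟩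
            rw [hw] at hcw
            exact hgq w hmem hcw.symm
        rw [hwx, hcx] at hw
        exact hw
      -- conclusion of regime A
      obtain ⟨d, hd0⟩ := hprin p₀ q₀ hp₀q₀
      refine ⟨d, ?_⟩
      intro x v
      by_cases hq0 : v d = q₀
      · rw [hq0]; exact pinch p₀ q₀ hp₀q₀ d hd0 x v hq0
      · by_cases hqp : v d = p₀
        · have hd0' : ∀ S : Finset (Fin n), fxv α x₀ (tvv S q₀ p₀) = q₀ ↔ d ∈ S :=
            fun S => (hsymm x₀ S p₀ q₀ hp₀q₀).trans (hd0 S)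
          rw [hqp]; exact pinch q₀ p₀ (Ne.symm hp₀q₀) d hd0' x v hqp
        · have hq₀q : q₀ ≠ v d := fun h => hq0 h.symm
          obtain ⟨d', hd'⟩ := hprin q₀ (v d) hq₀q
          have h1 : fxv α x₀ (tvv {d} q₀ (v d)) = q₀ :=
            pinch p₀ q₀ hp₀q₀ d hd0 x₀ (tvv {d} q₀ (v d)) (by simp [tvv])
          have h2 : d' = d := by
            have h3 := (hd' {d}).1 h1
            simpa using h3
          rw [h2] at hd'
          exact pinch q₀ (v d) hq₀q d hd' x v rfl
    · -- regime B : as many categories as objects, everything is a bijection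
      have hρ3 : 3 ≤ Fintype.card P := by rw [hPX]; exact hX3
      obtain ⟨p₀, q₀, r₀, hp₀q₀, hp₀r₀, hq₀r₀⟩ := exists_triple hρ3
      have hq₀p₀ : q₀ ≠ p₀ := Ne.symm hp₀q₀
      have hr₀p₀ : r₀ ≠ p₀ := Ne.symm hp₀r₀
      have hr₀q₀ : r₀ ≠ q₀ := Ne.symm hq₀r₀
      obtain ⟨x, y, z, hxy, hxz, hyz⟩ := exists_triple hX3
      have hyx : y ≠ x := Ne.symm hxy
      have hzx : z ≠ x := Ne.symm hxz
      have hzy : z ≠ y := Ne.symm hyz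
      -- outputs are injective
      have hinj : ∀ c : Profile n X P, Function.Injective (α c).1 := by
        intro c
        exact ((Fintype.bijective_iff_surjective_and_card _).2 ⟨(α c).2, hPX.symm⟩).1
      have hinj2 : ∀ (a b : X), a ≠ b → ∀ (v w : Fin n → P), (∀ i, v i ≠ w i) →
          fxv α a v ≠ fxv α b w := by
        intro a b hab v w hvw
        have hcs : ∀ i, ∃ c : Classif X P, c.1 a = v i ∧ c.1 b = w i :=
          fun i => hsub2 a b (v i) (w i) hab (hvw i)
        set c : Profile n X P := fun i => (hcs i).choose with hc
        have hca : (α c).1 a = fxv α a v := hfx c a _ (fun i => ((hcs i).choose_spec).1)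
        have hcb : (α c).1 b = fxv α b w := hfx c b _ (fun i => ((hcs i).choose_spec).2)
        rw [← hca, ← hcb]
        exact fun h => hab (hinj c h)
      -- exclusion lemma
      have hexcl : ∀ (S B : Finset (Fin n)) (p q r : P), p ≠ q → r ≠ p → r ≠ q → B ⊆ Sᶜ →
          fxv α x₀ (tvv S p q) = p → fxv α x₀ (tvv B p r) ≠ p := by
        intro S B p q r hpq hrp hrq hBS hS hBp
        obtain ⟨y', hy'1, _⟩ := exists_third hX3 x₀ x₀
        have hdist : ∀ i, tvv S p q i ≠ tvv B p r i := by
          intro i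
          by_cases hiS : i ∈ S
          · have hiB : i ∉ B := fun h => (Finset.mem_compl.1 (hBS h)) hiS
            simp only [tvv, if_pos hiS, if_neg hiB]
            exact Ne.symm hrp
          · by_cases hiB : i ∈ B
            · simp only [tvv, if_neg hiS, if_pos hiB]
              exact Ne.symm hpq
            · simp only [tvv, if_neg hiS, if_neg hiB]
              exact Ne.symm hrq
        have h2 := hinj2 x₀ y' (Ne.symm hy'1) (tvv S p q) (tvv B p r) hdist
        have h3 : fxv α y' (tvv B p r) = p :=
          (hcomm y' x₀ B p r (fun h => hrp h.symm)).trans hBp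
        exact h2 (hS.trans h3.symm)
      -- all pairwise families coincide
      have hE1 : ∀ (p q r : P), p ≠ q → r ≠ p → r ≠ q → ∀ S : Finset (Fin n),
          (fxv α x₀ (tvv S p q) = p ↔ fxv α x₀ (tvv S p r) = p) := by
        intro p q r hpq hrp hrq S
        constructor
        · intro h
          have h1 := hexcl S Sᶜ p q r hpq hrp hrq (le_refl _) h
          have h2 : fxv α x₀ (tvv Sᶜ p r) = r := by
            rcases hmemb x₀ Sᶜ p r (fun hh => hrp hh.symm) with h3 | h3
            · exact absurd h3 h1
            · exact h3
          exact (hflip x₀ S p r (fun hh => hrp hh.symm)).1 h2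
        · intro h
          have h1 := hexcl S Sᶜ p r q (fun hh => hrp hh.symm) (Ne.symm hpq) (Ne.symm hrq)
            (le_refl _) h
          have h2 : fxv α x₀ (tvv Sᶜ p q) = q := by
            rcases hmemb x₀ Sᶜ p q hpq with h3 | h3
            · exact absurd h3 h1
            · exact h3
          exact (hflip x₀ S p q hpq).1 h2
      have hE1' : ∀ (p q q' : P), p ≠ q → p ≠ q' → ∀ S : Finset (Fin n),
          (fxv α x₀ (tvv S p q) = p ↔ fxv α x₀ (tvv S p q') = p) := by
        intro p q q' hpq hpq' S
        by_cases hqq : q = q'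
        · rw [hqq]
        · exact hE1 p q q' hpq (Ne.symm hpq') (fun h => hqq h.symm) S
      have hueq : ∀ (p q : P), p ≠ q → ∀ S : Finset (Fin n),
          (fxv α x₀ (tvv S p q) = p ↔ fxv α x₀ (tvv S p₀ q₀) = p₀) := by
        intro p q hpq S
        by_cases hpp : p = p₀
        · subst hpp
          exact hE1' p q q₀ hpq hp₀q₀ S
        · by_cases hpq₀ : p = q₀
          · subst hpq₀
            exact (hE1' p q p₀ hpq hpp S).trans (hsymm x₀ S p₀ p (Ne.symm hpp))
          · exact (hE1' p q q₀ hpq hpq₀ S).trans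
              (((hsymm x₀ S q₀ p (fun h => hpq₀ h.symm)).trans
                (hE1' q₀ p p₀ (fun h => hpq₀ h.symm) hq₀p₀ S)).trans
                (hsymm x₀ S p₀ q₀ hp₀q₀))
      -- the three-partition lemma
      have h3p : ∀ (A B C : Finset (Fin n)), A ∪ B ∪ C = Finset.univ →
          Disjoint A B → Disjoint A C → Disjoint B C →
          ¬ (fxv α x₀ (tvv A p₀ q₀) = p₀) → ¬ (fxv α x₀ (tvv B p₀ q₀) = p₀) →
          ¬ (fxv α x₀ (tvv C p₀ q₀) = p₀) → False := by
        intro A B C hunion hAB hAC hBC huA huB huC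
        have hreg : ∀ i : Fin n, (i ∈ A ∧ i ∉ B ∧ i ∉ C) ∨ (i ∉ A ∧ i ∈ B ∧ i ∉ C) ∨
            (i ∉ A ∧ i ∉ B ∧ i ∈ C) := by
          intro i
          have hiu : i ∈ A ∪ B ∪ C := hunion ▸ Finset.mem_univ i
          simp only [Finset.mem_union] at hiu
          by_cases hiA : i ∈ A
          · exact Or.inl ⟨hiA, Finset.disjoint_left.1 hAB hiA, Finset.disjoint_left.1 hAC hiA⟩
          · by_cases hiB : i ∈ B
            · exact Or.inr (Or.inl ⟨hiA, hiB, Finset.disjoint_left.1 hBC hiB⟩)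
            · have hiC : i ∈ C := by
                rcases hiu with (h | h) | h
                · exact absurd h hiA
                · exact absurd h hiB
                · exact h
              exact Or.inr (Or.inr ⟨hiA, hiB, hiC⟩)
        set colc : Fin n → P := fun i => if i ∈ A then p₀ else if i ∈ B then q₀ else r₀
          with hcolc
        have hcolcm : ∀ i, colc i = p₀ ∨ colc i = q₀ ∨ colc i = r₀ := by
          intro i
          rw [hcolc]
          by_cases hiA : i ∈ A
          · simp [hiA]
          · by_cases hiB : i ∈ B <;> simp [hiA, hiB]
        -- the pinning construction
        have hpin : ∀ (a b : Fin n → P),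
            (∀ i, (a i = p₀ ∨ a i = q₀ ∨ a i = r₀) ∧ (b i = p₀ ∨ b i = q₀ ∨ b i = r₀) ∧
              colc i ≠ a i ∧ colc i ≠ b i ∧ a i ≠ b i) →
            (fxv α x colc ≠ fxv α y a) ∧ (fxv α x colc ≠ fxv α z b) ∧
              (fxv α x colc = p₀ ∨ fxv α x colc = q₀ ∨ fxv α x colc = r₀) := by
          intro a b hrow
          obtain ⟨g, hg1, hg2⟩ := exists_cover (((Finset.univ.erase x).erase y).erase z)
            (((Finset.univ.erase p₀).erase q₀).erase r₀)
            (by rw [Finset.card_erase_of_mem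
                      (Finset.mem_erase.2 ⟨hr₀q₀, Finset.mem_erase.2 ⟨hr₀p₀, Finset.mem_univ _⟩⟩),
                    Finset.card_erase_of_mem (Finset.mem_erase.2 ⟨hq₀p₀, Finset.mem_univ _⟩),
                    Finset.card_erase_of_mem (Finset.mem_univ _),
                    Finset.card_erase_of_mem
                      (Finset.mem_erase.2 ⟨hzy, Finset.mem_erase.2 ⟨hzx, Finset.mem_univ _⟩⟩),
                    Finset.card_erase_of_mem (Finset.mem_erase.2 ⟨hyx, Finset.mem_univ _⟩),
                    Finset.card_erase_of_mem (Finset.mem_univ _),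
                    Finset.card_univ, Finset.card_univ]; omega) p₀
          have csurj : ∀ i : Fin n, Function.Surjective
              (fun w => if w = x then colc i else if w = y then a i
                else if w = z then b i else g w) := by
            intro i t
            by_cases htm : t = p₀ ∨ t = q₀ ∨ t = r₀
            · rcases three_cover (hrow i).2.2.1 (hrow i).2.2.2.1 (hrow i).2.2.2.2
                (hcolcm i) (hrow i).1 (hrow i).2.1 htm with h | h | h
              · exact ⟨x, by simp [h]⟩
              · exact ⟨y, by simp [hyx, h]⟩
              · exact ⟨z, by simp [hzx, hzy, h]⟩
            · push_neg at htm
              obtain ⟨w, hws, hgw⟩ := hg2 t (by simp [htm.1, htm.2.1, htm.2.2])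
              have hw1 : w ≠ z := (Finset.mem_erase.1 hws).1
              have hw2 : w ≠ y := (Finset.mem_erase.1 (Finset.mem_erase.1 hws).2).1
              have hw3 : w ≠ x :=
                (Finset.mem_erase.1 (Finset.mem_erase.1 (Finset.mem_erase.1 hws).2).2).1
              exact ⟨w, by simp [hw1, hw2, hw3, hgw]⟩
          set c : Profile n X P := fun i => ⟨_, csurj i⟩ with hc
          have hcx : (α c).1 x = fxv α x colc := hfx c x _ (fun i => by simp [hc])
          have hcy : (α c).1 y = fxv α y a := hfx c y _ (fun i => by simp [hc, hyx])
          have hcz : (α c).1 z = fxv α z b := hfx c z _ (fun i => by simp [hc, hzx, hzy])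
          refine ⟨?_, ?_, ?_⟩
          · rw [← hcx, ← hcy]
            exact fun h => hxy (hinj c h)
          · rw [← hcx, ← hcz]
            exact fun h => hxz (hinj c h)
          · by_contra hnot
            push_neg at hnot
            have hmemQ : fxv α x colc ∈ ((Finset.univ.erase p₀).erase q₀).erase r₀ :=
              Finset.mem_erase.2 ⟨hnot.2.2, Finset.mem_erase.2 ⟨hnot.2.1,
                Finset.mem_erase.2 ⟨hnot.1, Finset.mem_univ _⟩⟩⟩
            obtain ⟨w, hws, hgw⟩ := hg2 _ hmemQ
            have hw1 : w ≠ z := (Finset.mem_erase.1 hws).1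
            have hw2 : w ≠ y := (Finset.mem_erase.1 (Finset.mem_erase.1 hws).2).1
            have hw3 : w ≠ x :=
              (Finset.mem_erase.1 (Finset.mem_erase.1 (Finset.mem_erase.1 hws).2).2).1
            have hcw : (α c).1 w = fxv α w (fun _ => g w) :=
              hfx c w _ (fun i => by simp [hc, hw1, hw2, hw3])
            rw [hconst, hgw] at hcw
            have := hinj c (hcw.trans hcx.symm)
            exact hw3 this
        -- profile 1
        have hrow1 : ∀ i, (tvv C q₀ r₀ i = p₀ ∨ tvv C q₀ r₀ i = q₀ ∨ tvv C q₀ r₀ i = r₀) ∧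
            (tvv A q₀ p₀ i = p₀ ∨ tvv A q₀ p₀ i = q₀ ∨ tvv A q₀ p₀ i = r₀) ∧
            colc i ≠ tvv C q₀ r₀ i ∧ colc i ≠ tvv A q₀ p₀ i ∧
            tvv C q₀ r₀ i ≠ tvv A q₀ p₀ i := by
          intro i
          rcases hreg i with ⟨h1, h2, h3⟩ | ⟨h1, h2, h3⟩ | ⟨h1, h2, h3⟩
          · simp [hcolc, tvv, h1, h2, h3, hp₀q₀, hp₀r₀, hq₀r₀, hq₀p₀, hr₀p₀, hr₀q₀]
          · simp [hcolc, tvv, h1, h2, h3, hp₀q₀, hp₀r₀, hq₀r₀, hq₀p₀, hr₀p₀, hr₀q₀]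
          · simp [hcolc, tvv, h1, h2, h3, hp₀q₀, hp₀r₀, hq₀r₀, hq₀p₀, hr₀p₀, hr₀q₀]
        have hrow2 : ∀ i, (tvv C p₀ r₀ i = p₀ ∨ tvv C p₀ r₀ i = q₀ ∨ tvv C p₀ r₀ i = r₀) ∧
            (tvv B p₀ q₀ i = p₀ ∨ tvv B p₀ q₀ i = q₀ ∨ tvv B p₀ q₀ i = r₀) ∧
            colc i ≠ tvv C p₀ r₀ i ∧ colc i ≠ tvv B p₀ q₀ i ∧
            tvv C p₀ r₀ i ≠ tvv B p₀ q₀ i := by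
          intro i
          rcases hreg i with ⟨h1, h2, h3⟩ | ⟨h1, h2, h3⟩ | ⟨h1, h2, h3⟩
          · simp [hcolc, tvv, h1, h2, h3, hp₀q₀, hp₀r₀, hq₀r₀, hq₀p₀, hr₀p₀, hr₀q₀]
          · simp [hcolc, tvv, h1, h2, h3, hp₀q₀, hp₀r₀, hq₀r₀, hq₀p₀, hr₀p₀, hr₀q₀]
          · simp [hcolc, tvv, h1, h2, h3, hp₀q₀, hp₀r₀, hq₀r₀, hq₀p₀, hr₀p₀, hr₀q₀]
        obtain ⟨ha1, hb1, hm1⟩ := hpin (tvv C q₀ r₀) (tvv A q₀ p₀) hrow1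
        obtain ⟨ha2, hb2, _⟩ := hpin (tvv C p₀ r₀) (tvv B p₀ q₀) hrow2
        have hy1 : fxv α y (tvv C q₀ r₀) = r₀ := by
          rw [hcomm y x₀ C q₀ r₀ hq₀r₀]
          rcases hmemb x₀ C q₀ r₀ hq₀r₀ with h | h
          · exact absurd ((hueq q₀ r₀ hq₀r₀ C).1 h) huC
          · exact h
        have hz1 : fxv α z (tvv A q₀ p₀) = p₀ := by
          rw [hcomm z x₀ A q₀ p₀ hq₀p₀]
          rcases hmemb x₀ A q₀ p₀ hq₀p₀ with h | h
          · exact absurd ((hueq q₀ p₀ hq₀p₀ A).1 h) huA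
          · exact h
        have hy2 : fxv α y (tvv C p₀ r₀) = r₀ := by
          rw [hcomm y x₀ C p₀ r₀ hp₀r₀]
          rcases hmemb x₀ C p₀ r₀ hp₀r₀ with h | h
          · exact absurd ((hueq p₀ r₀ hp₀r₀ C).1 h) huC
          · exact h
        have hz2 : fxv α z (tvv B p₀ q₀) = q₀ := by
          rw [hcomm z x₀ B p₀ q₀ hp₀q₀]
          rcases hmemb x₀ B p₀ q₀ hp₀q₀ with h | h
          · exact absurd h huB
          · exact h
        rw [hy1] at ha1
        rw [hz1] at hb1
        rw [hy2] at ha2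
        rw [hz2] at hb2
        rcases hm1 with h | h | h
        · exact hb1 h
        · exact hb2 h
        · exact ha1 h
      -- principal ultrafilter
      obtain ⟨d, hd0⟩ : ∃ d : Fin n, ∀ S : Finset (Fin n),
          fxv α x₀ (tvv S p₀ q₀) = p₀ ↔ d ∈ S := by
        apply principal_of_family (fun S => fxv α x₀ (tvv S p₀ q₀) = p₀)
        · exact hNU x₀ p₀ q₀
        · intro S
          constructor
          · intro h1 h2
            have h3 := (hflip x₀ S p₀ q₀ hp₀q₀).2 h2
            rw [h1] at h3; exact hp₀q₀ h3
          · intro h1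
            rcases hMx x₀ S p₀ q₀ hp₀q₀ with ⟨h2, _⟩ | ⟨_, h3⟩
            · exact absurd h2 h1
            · exact h3
        · intro S T hS hT
          by_contra hST
          refine h3p (S ∩ T) (S \ T) Sᶜ ?_ ?_ ?_ ?_ hST ?_ ?_
          · ext i
            simp only [Finset.mem_union, Finset.mem_inter, Finset.mem_sdiff,
              Finset.mem_compl, Finset.mem_univ, iff_true]
            by_cases hiS : i ∈ S
            · by_cases hiT : i ∈ T
              · exact Or.inl (Or.inl ⟨hiS, hiT⟩)
              · exact Or.inl (Or.inr ⟨hiS, hiT⟩)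
            · exact Or.inr hiS
          · rw [Finset.disjoint_left]
            intro i hi1 hi2
            rw [Finset.mem_inter] at hi1
            rw [Finset.mem_sdiff] at hi2
            exact hi2.2 hi1.2
          · rw [Finset.disjoint_left]
            intro i hi1 hi2
            rw [Finset.mem_inter] at hi1
            rw [Finset.mem_compl] at hi2
            exact hi2 hi1.1
          · rw [Finset.disjoint_left]
            intro i hi1 hi2
            rw [Finset.mem_sdiff] at hi1
            rw [Finset.mem_compl] at hi2
            exact hi2 hi1.1
          · intro h
            have hsub : S \ T ⊆ Tᶜ := by
              intro i hi
              rw [Finset.mem_sdiff] at hi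
              rw [Finset.mem_compl]
              exact hi.2
            exact hexcl T (S \ T) p₀ q₀ r₀ hp₀q₀ hr₀p₀ hr₀q₀ hsub hT
              ((hueq p₀ r₀ hp₀r₀ (S \ T)).2 h)
          · intro h
            have h3 := (hflip x₀ S p₀ q₀ hp₀q₀).2 hS
            exact hp₀q₀ (h.symm.trans h3)
      -- the two-valued dictator
      have htvd : ∀ (a : X) (S : Finset (Fin n)) (p q : P), p ≠ q →
          fxv α a (tvv S p q) = tvv S p q d := by
        intro a S p q hpq
        rw [hcomm a x₀ S p q hpq]
        by_cases hdS : d ∈ S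
        · have h1 : fxv α x₀ (tvv S p q) = p := (hueq p q hpq S).2 ((hd0 S).2 hdS)
          rw [h1, tvv, if_pos hdS]
        · have h1 : ¬ fxv α x₀ (tvv S p q) = p :=
            fun h => hdS ((hd0 S).1 ((hueq p q hpq S).1 h))
          rcases hmemb x₀ S p q hpq with h2 | h2
          · exact absurd h2 h1
          · rw [h2, tvv, if_neg hdS]
      -- the final stroke
      refine ⟨d, ?_⟩
      intro a v
      by_contra hne
      obtain ⟨b, hb1, _⟩ := exists_third hX3 a a
      set S : Finset (Fin n) := Finset.univ.filter (fun i => v i ≠ fxv α a v) with hSdef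
      have hrowv : ∀ i, v i ≠ tvv S (fxv α a v) (v d) i := by
        intro i
        by_cases hiS : i ∈ S
        · have hvi : v i ≠ fxv α a v := by
            rw [hSdef] at hiS
            simpa using hiS
          simp only [tvv, if_pos hiS]
          exact hvi
        · have hvi : v i = fxv α a v := by
            rw [hSdef] at hiS
            simpa using hiS
          simp only [tvv, if_neg hiS]
          exact fun h => hne (hvi.symm.trans h)
      have h2 := hinj2 a b (Ne.symm hb1) v (tvv S (fxv α a v) (v d)) hrowv
      have h3 : fxv α b (tvv S (fxv α a v) (v d)) = fxv α a v := by
        rw [htvd b S _ _ hne]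
        have hdS : d ∈ S := by
          rw [hSdef]
          simp only [Finset.mem_filter, Finset.mem_univ, true_and]
          exact fun h => hne h.symm
        simp [tvv, hdS]
      exact h2 h3.symm
  obtain ⟨d, hd⟩ := key
  exact ⟨d, fun c => funext fun x => by
    rw [hfx c x _ (fun i => rfl)]; exact hd x _⟩
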